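/- Let G be a minimal non-sum-perfect graph with at least 7 vertices. Then G is connected. -/

import Mathlib

open SimpleGraph Finset

/-- The clique number of a finite graph: the largest `n` such that `G` has an `n`-clique. -/
noncomputable def omegaNum {V : Type*} [Fintype V] (G : SimpleGraph V) : ℕ :=
  sSup {n | ∃ s : Finset V, G.IsNClique n s}

/-- The stability (independence) number: the clique number of the complement. -/
noncomputable def alphaNum {V : Type*} [Fintype V] (G : SimpleGraph V) : ℕ :=
  omegaNum Gᶜ

/-- A graph is sum-perfect if every induced subgraph `H` satisfies `α(H) + ω(H) ≥ |V(H)|`. -/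
def SumPerfect {V : Type*} [Fintype V] (G : SimpleGraph V) : Prop :=
  ∀ s : Finset V, s.card ≤ alphaNum (G.induce (s : Set V)) + omegaNum (G.induce (s : Set V))

/-- `G` is minimally non-sum-perfect: not sum-perfect, but every proper induced subgraph is. -/
def MinimalNonSumPerfect {V : Type*} [Fintype V] (G : SimpleGraph V) : Prop :=
  ¬ SumPerfect G ∧ ∀ s : Finset V, s ≠ Finset.univ → SumPerfect (G.induce (s : Set V))

/-- `G` is threshold: there is an ordering of all vertices in which every vertex is adjacent
to all of the earlier vertices or to none of them. -/
def IsThreshold {V : Type*} [Fintype V] (G : SimpleGraph V) : Prop :=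
  ∃ L : List V, L.Nodup ∧ (∀ v : V, v ∈ L) ∧
    ∀ (i j k : ℕ) (hi : i < L.length) (hj : j < L.length) (hk : k < L.length),
      j < i → k < i →
        (G.Adj (L.get ⟨i, hi⟩) (L.get ⟨j, hj⟩) ↔ G.Adj (L.get ⟨i, hi⟩) (L.get ⟨k, hk⟩))

/-!
Let `A` be a union of components of `G` and `B` its complement. Then `α(G) = α(A) + α(B)` and
`ω(G) = max (ω A) (ω B)`, and minimality forces `|V| = α(A) + α(B) + max (ω A) (ω B) + 1`.
Comparing this with the proper induced subgraphs `A ∪ K_B` and `K_A ∪ B`, where `K_A`, `K_B` are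
maximum cliques, shows that one side, say `A`, is a clique. If `B` is a clique as well, both have
three vertices. Otherwise `A = K₂`, `|B| = α(B) + ω(B)`, and no single vertex deletion lowers
`α(B)` or `ω(B)`. Such a graph has `α(B), ω(B) ≤ 2`: if `ω(B) ≥ 3`, a maximum stable set `I` and
`K = B \ I` split `B` into a clique and a stable set, every `v ∈ K` is missed by a maximum clique
`(K - v) + z` and every `z ∈ I` by a maximum stable set `(I - z) + y`, and these cannot coexist;
`α(B) ≥ 3` is the same situation in the complement. Either way `|V| ≤ 6`.
-/

theorem Finset.exists_mem_ne_ne_of_two_lt_card {α : Type*} [DecidableEq α] {s : Finset α}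
    (hs : 2 < s.card) (x y : α) : ∃ v ∈ s, v ≠ x ∧ v ≠ y := by
  obtain ⟨v, hv, hvxy⟩ := exists_mem_notMem_of_card_lt_card (card_le_two.trans_lt hs)
  simp only [mem_insert, mem_singleton, not_or] at hvxy
  exact ⟨v, hv, hvxy⟩

theorem Finset.union_ne_univ_of_ssubset {α : Type*} [Fintype α] [DecidableEq α]
    {s t u : Finset α} (hs : s ⊂ u) (ht : Disjoint t u) : s ∪ t ≠ univ := by
  obtain ⟨x, hxu, hxs⟩ := exists_of_ssubset hs
  intro h
  rcases mem_union.1 (h ▸ mem_univ x) with hx | hx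
  · exact hxs hx
  · exact Finset.disjoint_left.1 ht hx hxu

namespace SimpleGraph

variable {V : Type*} {G : SimpleGraph V}

noncomputable def cliqueNumOn (G : SimpleGraph V) (s : Finset V) : ℕ :=
  (G.induce (s : Set V)).cliqueNum

theorem induce_compl (G : SimpleGraph V) (s : Set V) : (G.induce s)ᶜ = Gᶜ.induce s := by
  ext a b
  simp [Subtype.ext_iff]

section CliqueNumOn

variable {s t : Finset V}

theorem IsClique.card_le_cliqueNumOn (ht : G.IsClique (t : Set V)) (hts : t ⊆ s) :
    t.card ≤ G.cliqueNumOn s := by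
  classical
  have hmap : (t.subtype (· ∈ (s : Set V))).map (Function.Embedding.subtype _) = t :=
    Finset.subtype_map_of_mem hts
  have hclique : (G.induce (s : Set V)).IsNClique t.card (t.subtype (· ∈ (s : Set V))) := by
    rw [isNClique_induce_iff, hmap]
    exact ⟨ht, rfl⟩
  exact hclique.card_eq ▸ hclique.isClique.card_le_cliqueNum

theorem exists_isClique_card_eq_cliqueNumOn (G : SimpleGraph V) (s : Finset V) :
    ∃ t ⊆ s, G.IsClique (t : Set V) ∧ t.card = G.cliqueNumOn s := by
  obtain ⟨t, ht⟩ := (G.induce (s : Set V)).exists_isNClique_cliqueNum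
  rw [isNClique_induce_iff] at ht
  exact ⟨_, fun x hx => by simpa using Finset.map_subtype_subset t hx, ht.isClique, ht.card_eq⟩

theorem cliqueNum_eq_cliqueNumOn_univ [Fintype V] (G : SimpleGraph V) :
    G.cliqueNum = G.cliqueNumOn univ := by
  apply le_antisymm
  · obtain ⟨t, ht⟩ := G.exists_isNClique_cliqueNum
    exact ht.card_eq ▸ ht.isClique.card_le_cliqueNumOn (subset_univ t)
  · obtain ⟨t, -, ht, hcard⟩ := G.exists_isClique_card_eq_cliqueNumOn univ
    exact hcard ▸ ht.card_le_cliqueNum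

theorem cliqueNumOn_mono (h : s ⊆ t) : G.cliqueNumOn s ≤ G.cliqueNumOn t := by
  obtain ⟨u, hus, hu, hcard⟩ := G.exists_isClique_card_eq_cliqueNumOn s
  exact hcard ▸ hu.card_le_cliqueNumOn (hus.trans h)

theorem cliqueNumOn_le_card : G.cliqueNumOn s ≤ s.card := by
  obtain ⟨u, hus, -, hcard⟩ := G.exists_isClique_card_eq_cliqueNumOn s
  exact hcard ▸ card_le_card hus

theorem IsClique.cliqueNumOn_eq (hs : G.IsClique (s : Set V)) : G.cliqueNumOn s = s.card :=
  cliqueNumOn_le_card.antisymm (hs.card_le_cliqueNumOn subset_rfl)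

theorem one_le_cliqueNumOn (hs : s.Nonempty) : 1 ≤ G.cliqueNumOn s := by
  obtain ⟨v, hv⟩ := hs
  have hclique : G.IsClique (({v} : Finset V) : Set V) := by simp
  simpa using hclique.card_le_cliqueNumOn (singleton_subset_iff.2 hv)

theorem isClique_compl_of_cliqueNumOn_le_one (h : G.cliqueNumOn s ≤ 1) :
    Gᶜ.IsClique (s : Set V) := by
  classical
  intro x hx y hy hxy
  refine ⟨hxy, fun hadj => ?_⟩
  have hclique : G.IsClique (({x, y} : Finset V) : Set V) := by
    rw [coe_pair]
    exact isClique_pair.2 fun _ => hadj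
  have := hclique.card_le_cliqueNumOn (s := s) (by simpa [insert_subset_iff] using ⟨hx, hy⟩)
  rw [card_pair hxy] at this
  omega

variable [DecidableEq V]

theorem card_inter_le_one_of_isClique (hs : G.IsClique (s : Set V))
    (ht : Gᶜ.IsClique (t : Set V)) : (s ∩ t).card ≤ 1 := by
  refine card_le_one.2 fun x hx y hy => by_contra fun hxy => ?_
  rw [mem_inter] at hx hy
  exact (ht hx.2 hy.2 hxy).2 (hs hx.1 hy.1 hxy)

theorem IsClique.cliqueNumOn_compl_le_one (hs : G.IsClique (s : Set V)) :
    Gᶜ.cliqueNumOn s ≤ 1 := by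
  obtain ⟨t, hts, ht, hcard⟩ := Gᶜ.exists_isClique_card_eq_cliqueNumOn s
  rw [← hcard, ← inter_eq_right.2 hts]
  exact card_inter_le_one_of_isClique hs ht

theorem cliqueNumOn_union_le : G.cliqueNumOn (s ∪ t) ≤ G.cliqueNumOn s + G.cliqueNumOn t := by
  obtain ⟨u, hu, huc, hcard⟩ := G.exists_isClique_card_eq_cliqueNumOn (s ∪ t)
  calc G.cliqueNumOn (s ∪ t) = (u ∩ s ∪ u ∩ t).card := by
        rw [← inter_union_distrib_left, inter_eq_left.2 hu, hcard]
    _ ≤ (u ∩ s).card + (u ∩ t).card := card_union_le _ _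
    _ ≤ G.cliqueNumOn s + G.cliqueNumOn t := add_le_add
        ((huc.subset (coe_subset.2 inter_subset_left)).card_le_cliqueNumOn inter_subset_right)
        ((huc.subset (coe_subset.2 inter_subset_left)).card_le_cliqueNumOn inter_subset_right)

theorem cliqueNumOn_union_of_not_adj (hst : ∀ x ∈ s, ∀ y ∈ t, ¬ G.Adj x y) :
    G.cliqueNumOn (s ∪ t) = max (G.cliqueNumOn s) (G.cliqueNumOn t) := by
  refine le_antisymm ?_
    (max_le (cliqueNumOn_mono subset_union_left) (cliqueNumOn_mono subset_union_right))
  obtain ⟨u, hu, huc, hcard⟩ := G.exists_isClique_card_eq_cliqueNumOn (s ∪ t)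
  have hside : u ⊆ s ∨ u ⊆ t := by
    by_contra! h
    obtain ⟨x, hxu, hxs⟩ := not_subset.1 h.1
    obtain ⟨y, hyu, hyt⟩ := not_subset.1 h.2
    have hxt := (mem_union.1 (hu hxu)).resolve_left hxs
    have hys := (mem_union.1 (hu hyu)).resolve_right hyt
    exact hst y hys x hxt (huc hyu hxu fun hyx => hxs (hyx ▸ hys))
  rw [← hcard]
  rcases hside with h | h
  · exact le_max_of_le_left (huc.card_le_cliqueNumOn h)
  · exact le_max_of_le_right (huc.card_le_cliqueNumOn h)

theorem cliqueNumOn_compl_union_of_not_adj (hd : Disjoint s t)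
    (hst : ∀ x ∈ s, ∀ y ∈ t, ¬ G.Adj x y) :
    Gᶜ.cliqueNumOn (s ∪ t) = Gᶜ.cliqueNumOn s + Gᶜ.cliqueNumOn t := by
  refine le_antisymm cliqueNumOn_union_le ?_
  obtain ⟨u, hus, hu, hucard⟩ := Gᶜ.exists_isClique_card_eq_cliqueNumOn s
  obtain ⟨v, hvt, hv, hvcard⟩ := Gᶜ.exists_isClique_card_eq_cliqueNumOn t
  rw [← hucard, ← hvcard, ← card_union_of_disjoint (hd.mono hus hvt)]
  refine IsClique.card_le_cliqueNumOn ?_ (union_subset_union hus hvt)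
  rw [coe_union]
  exact Set.pairwise_union.2 ⟨hu, hv, fun x hx y hy hxy =>
    ⟨⟨hxy, hst x (hus hx) y (hvt hy)⟩, ⟨hxy.symm, fun h => hst x (hus hx) y (hvt hy) h.symm⟩⟩⟩

theorem exists_isClique_insert_erase {P Q C : Finset V} {v : V}
    (hQ : Gᶜ.IsClique (Q : Set V)) (hv : v ∈ P) (hC : G.IsClique (C : Set V))
    (hCPQ : C ⊆ (P ∪ Q).erase v) (hcard : P.card ≤ C.card) :
    ∃ z ∈ Q, G.IsClique (↑(insert z (P.erase v)) : Set V) := by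
  have hCQ : (C ∩ Q).card ≤ 1 := card_inter_le_one_of_isClique hC hQ
  have hsplit : C.card ≤ (C ∩ P.erase v).card + (C ∩ Q).card := by
    calc C.card = (C ∩ P.erase v ∪ C ∩ Q).card := by
          rw [← inter_union_distrib_left, inter_eq_left.2]
          intro x hx
          have := hCPQ hx
          simp only [mem_erase, mem_union] at this ⊢
          tauto
      _ ≤ _ := card_union_le _ _
  have hCP : (C ∩ P.erase v).card ≤ P.card - 1 :=
    card_erase_of_mem hv ▸ card_le_card inter_subset_right
  have hPC : P.erase v ⊆ C := by
    have := eq_of_subset_of_card_le (inter_subset_right (s₁ := C) (s₂ := P.erase v))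
      (by rw [card_erase_of_mem hv]; omega)
    exact this ▸ inter_subset_left
  have hP : 0 < P.card := card_pos.2 ⟨v, hv⟩
  obtain ⟨z, hz⟩ : (C ∩ Q).Nonempty := card_pos.1 (by omega)
  rw [mem_inter] at hz
  exact ⟨z, hz.2, hC.subset (coe_subset.2 (insert_subset hz.1 hPC))⟩

theorem exists_forall_not_isClique_compl_insert_erase {K I : Finset V} (hKI : Disjoint K I)
    (hK₃ : 2 < K.card) (hK : G.IsClique (K : Set V)) (hω : G.cliqueNumOn (K ∪ I) ≤ K.card)
    (hf : ∀ v ∈ K, ∃ z ∈ I, G.IsClique (↑(insert z (K.erase v)) : Set V)) :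
    ∃ z ∈ I, ∀ y ∈ K, ¬ Gᶜ.IsClique (↑(insert y (I.erase z)) : Set V) := by
  -- otherwise `insert z K` would be a clique larger than `K`
  have hnot_adj : ∀ z ∈ I, ∀ v ∈ K, G.IsClique (↑(insert z (K.erase v)) : Set V) →
      ¬ G.Adj z v := by
    intro z hz v hv hzK hzv
    have hclique : G.IsClique (↑(insert z K) : Set V) := by
      rw [← insert_erase hv, insert_comm, coe_insert, isClique_insert]
      refine ⟨hzK, fun b hb hvb => ?_⟩
      rcases mem_insert.1 hb with rfl | hb
      · exact hzv.symm
      · exact hK hv (mem_of_mem_erase hb) hvb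
    have := hclique.card_le_cliqueNumOn (insert_subset (mem_union_right K hz) subset_union_left)
    rw [card_insert_of_notMem (Finset.disjoint_right.1 hKI hz)] at this
    omega
  obtain ⟨v₀, hv₀⟩ : K.Nonempty := card_pos.1 (by omega)
  obtain ⟨z₀, hz₀, hz₀K⟩ := hf v₀ hv₀
  refine ⟨z₀, hz₀, fun y hy hy₀I => ?_⟩
  obtain ⟨v, hv, hvv₀, hvy⟩ := exists_mem_ne_ne_of_two_lt_card hK₃ v₀ y
  obtain ⟨z, hz, hzK⟩ := hf v hv
  have hzK_adj : ∀ k ∈ K, k ≠ v → G.Adj z k := fun k hk hkv =>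
    hzK (mem_insert_self z _) (by simp [hk, hkv]) (fun h => Finset.disjoint_left.1 hKI hk (h ▸ hz))
  have hzz₀ : z ≠ z₀ := by
    rintro rfl
    exact hnot_adj z hz v₀ hv₀ hz₀K (hzK_adj v₀ hv₀ hvv₀.symm)
  exact (hy₀I (mem_insert_self y _) (by simp [hz, hzz₀])
    (fun h => Finset.disjoint_left.1 hKI hy (h ▸ hz))).2 (hzK_adj y hy hvy.symm).symm

theorem cliqueNumOn_le_two_of_forall_erase {B : Finset V}
    (hcard : B.card = Gᶜ.cliqueNumOn B + G.cliqueNumOn B)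
    (hα : ∀ u ∈ B, Gᶜ.cliqueNumOn (B.erase u) = Gᶜ.cliqueNumOn B)
    (hω : ∀ u ∈ B, G.cliqueNumOn (B.erase u) = G.cliqueNumOn B) :
    G.cliqueNumOn B ≤ 2 := by
  by_contra! h₃
  obtain ⟨I, hIB, hI, hIcard⟩ := Gᶜ.exists_isClique_card_eq_cliqueNumOn B
  set K := B \ I
  have hKcard : K.card = G.cliqueNumOn B := by rw [card_sdiff_of_subset hIB]; omega
  have hK₃ : 2 < K.card := by omega
  have hB : B = K ∪ I := (sdiff_union_of_subset hIB).symm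
  have hf : ∀ v ∈ K, ∃ z ∈ I, G.IsClique (↑(insert z (K.erase v)) : Set V) := fun v hv => by
    obtain ⟨C, hCB, hC, hCcard⟩ := G.exists_isClique_card_eq_cliqueNumOn (B.erase v)
    exact exists_isClique_insert_erase hI hv hC (hB ▸ hCB)
      (by rw [hCcard, hω v (mem_sdiff.1 hv).1, hKcard])
  have hK : G.IsClique (K : Set V) := by
    intro x hx y hy hxy
    obtain ⟨v, hv, hvx, hvy⟩ := exists_mem_ne_ne_of_two_lt_card hK₃ x y
    obtain ⟨z, -, hz⟩ := hf v hv
    exact hz (by simp [hx, hvx.symm]) (by simp [hy, hvy.symm]) hxy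
  obtain ⟨z, hz, hzK⟩ := exists_forall_not_isClique_compl_insert_erase sdiff_disjoint
    hK₃ hK (by rw [← hB, hKcard]) hf
  obtain ⟨J, hJB, hJ, hJcard⟩ := Gᶜ.exists_isClique_card_eq_cliqueNumOn (B.erase z)
  obtain ⟨y, hy, hyI⟩ := exists_isClique_insert_erase (G := Gᶜ) (P := I) (Q := K)
    (by rwa [compl_compl]) hz hJ (by rwa [union_comm, ← hB]) (by rw [hJcard, hα z (hIB hz), hIcard])
  exact hzK y hy hyI

end CliqueNumOn

def IsUnionOfComponents (G : SimpleGraph V) (A : Finset V) : Prop :=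
  ∀ x ∈ A, ∀ y ∉ A, ¬ G.Adj x y

theorem IsUnionOfComponents.compl [Fintype V] [DecidableEq V] {A : Finset V}
    (hA : G.IsUnionOfComponents A) : G.IsUnionOfComponents Aᶜ :=
  fun x hx y hy hxy => hA y (by simpa using hy) x (mem_compl.1 hx) hxy.symm

end SimpleGraph

section MinimalNonSumPerfect

variable {V : Type*} [Fintype V] {G : SimpleGraph V}

theorem SumPerfect.card_le (h : SumPerfect G) : Fintype.card V ≤ Gᶜ.cliqueNum + G.cliqueNum := by
  have h' : (univ : Finset V).card ≤ Gᶜ.cliqueNumOn univ + G.cliqueNumOn univ := by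
    have := h univ
    rwa [alphaNum, induce_compl] at this
  rwa [card_univ, ← cliqueNum_eq_cliqueNumOn_univ, ← cliqueNum_eq_cliqueNumOn_univ] at h'

theorem MinimalNonSumPerfect.card_le_of_ne_univ (hG : MinimalNonSumPerfect G) {s : Finset V}
    (hs : s ≠ univ) : s.card ≤ Gᶜ.cliqueNumOn s + G.cliqueNumOn s := by
  have := (hG.2 s hs).card_le
  rw [induce_compl] at this
  exact (Fintype.card_coe s).symm.trans_le this

theorem MinimalNonSumPerfect.lt_card (hG : MinimalNonSumPerfect G) :
    Gᶜ.cliqueNumOn univ + G.cliqueNumOn univ < Fintype.card V := by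
  obtain ⟨s, hs⟩ := not_forall.1 hG.1
  rw [alphaNum, induce_compl, not_le] at hs
  by_cases h : s = univ
  · subst h
    exact card_univ (α := V) ▸ hs
  · exact absurd (hG.card_le_of_ne_univ h) hs.not_ge

variable [DecidableEq V] {A : Finset V}

theorem MinimalNonSumPerfect.card_add_card_le (hG : MinimalNonSumPerfect G)
    (hA : G.IsUnionOfComponents A) {s t : Finset V} (hs : s ⊆ A) (ht : t ⊆ Aᶜ)
    (hst : s ∪ t ≠ univ) :
    s.card + t.card ≤
      Gᶜ.cliqueNumOn s + Gᶜ.cliqueNumOn t + max (G.cliqueNumOn s) (G.cliqueNumOn t) := by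
  have hd : Disjoint s t :=
    disjoint_of_subset_left hs (disjoint_of_subset_right ht disjoint_compl_right)
  have hno : ∀ x ∈ s, ∀ y ∈ t, ¬ G.Adj x y := fun x hx y hy => hA x (hs hx) y (mem_compl.1 (ht hy))
  have := hG.card_le_of_ne_univ hst
  rwa [card_union_of_disjoint hd, cliqueNumOn_compl_union_of_not_adj hd hno,
    cliqueNumOn_union_of_not_adj hno] at this

theorem MinimalNonSumPerfect.add_max_lt_card (hG : MinimalNonSumPerfect G)
    (hA : G.IsUnionOfComponents A) :
    Gᶜ.cliqueNumOn A + Gᶜ.cliqueNumOn Aᶜ + max (G.cliqueNumOn A) (G.cliqueNumOn Aᶜ) <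
      Fintype.card V := by
  have hno : ∀ x ∈ A, ∀ y ∈ Aᶜ, ¬ G.Adj x y := fun x hx y hy => hA x hx y (mem_compl.1 hy)
  have := hG.lt_card
  rwa [← union_compl A, cliqueNumOn_compl_union_of_not_adj disjoint_compl_right hno,
    cliqueNumOn_union_of_not_adj hno] at this

theorem MinimalNonSumPerfect.cliqueNumOn_erase_eq (hG : MinimalNonSumPerfect G)
    (hA : G.IsUnionOfComponents A) {v : V} (hv : v ∈ A) :
    Gᶜ.cliqueNumOn (A.erase v) = Gᶜ.cliqueNumOn A ∧
      max (G.cliqueNumOn (A.erase v)) (G.cliqueNumOn Aᶜ) =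
        max (G.cliqueNumOn A) (G.cliqueNumOn Aᶜ) := by
  have hdel := hG.card_add_card_le hA (erase_subset v A) subset_rfl
    (union_ne_univ_of_ssubset (erase_ssubset hv) disjoint_compl_left)
  have hα := cliqueNumOn_mono (G := Gᶜ) (erase_subset v A)
  have hω := cliqueNumOn_mono (G := G) (erase_subset v A)
  have := hG.add_max_lt_card hA
  have := A.card_add_card_compl
  rw [card_erase_of_mem hv] at hdel
  have : 0 < A.card := card_pos.2 ⟨v, hv⟩
  omega

theorem MinimalNonSumPerfect.card_eq_add_max (hG : MinimalNonSumPerfect G)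
    (hA : G.IsUnionOfComponents A) (hA₀ : A.Nonempty) :
    Fintype.card V =
      Gᶜ.cliqueNumOn A + Gᶜ.cliqueNumOn Aᶜ + max (G.cliqueNumOn A) (G.cliqueNumOn Aᶜ) + 1 := by
  obtain ⟨v, hv⟩ := hA₀
  have hdel := hG.card_add_card_le hA (erase_subset v A) subset_rfl
    (union_ne_univ_of_ssubset (erase_ssubset hv) disjoint_compl_left)
  have := hG.cliqueNumOn_erase_eq hA hv
  have := hG.add_max_lt_card hA
  have := A.card_add_card_compl
  rw [card_erase_of_mem hv] at hdel
  have : 0 < A.card := card_pos.2 ⟨v, hv⟩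
  omega

theorem MinimalNonSumPerfect.two_le_cliqueNumOn_compl (hG : MinimalNonSumPerfect G)
    (hA : G.IsUnionOfComponents A) (hAc : Aᶜ.Nonempty) : 2 ≤ G.cliqueNumOn Aᶜ := by
  by_contra! h
  have hα : Gᶜ.cliqueNumOn Aᶜ = Aᶜ.card :=
    (isClique_compl_of_cliqueNumOn_le_one (by omega)).cliqueNumOn_eq
  have := hG.card_le_of_ne_univ (s := A) fun h => by simp [h] at hAc
  have := hG.add_max_lt_card hA
  have := A.card_add_card_compl
  omega

theorem MinimalNonSumPerfect.isClique_or_isClique_compl (hG : MinimalNonSumPerfect G)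
    (hA : G.IsUnionOfComponents A) (hA₀ : A.Nonempty) (hAc : Aᶜ.Nonempty) :
    G.IsClique (A : Set V) ∨ G.IsClique (↑Aᶜ : Set V) := by
  by_contra! h
  obtain ⟨K, hKA, hK, hKcard⟩ := G.exists_isClique_card_eq_cliqueNumOn A
  obtain ⟨L, hLA, hL, hLcard⟩ := G.exists_isClique_card_eq_cliqueNumOn Aᶜ
  have hKL := hG.card_add_card_le hA hKA subset_rfl <| union_ne_univ_of_ssubset
    (ssubset_of_subset_of_ne hKA fun e => h.1 (e ▸ hK)) disjoint_compl_left
  have hAL := hG.card_add_card_le hA subset_rfl hLA <| union_comm L A ▸ union_ne_univ_of_ssubset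
    (ssubset_of_subset_of_ne hLA fun e => h.2 (e ▸ hL)) disjoint_compl_right
  have := hK.cliqueNumOn_compl_le_one
  have := hL.cliqueNumOn_compl_le_one
  rw [hK.cliqueNumOn_eq] at hKL
  rw [hL.cliqueNumOn_eq] at hAL
  have := hG.add_max_lt_card hA
  have := A.card_add_card_compl
  have h₁ := hG.two_le_cliqueNumOn_compl hA hAc
  have h₂ := hG.two_le_cliqueNumOn_compl hA.compl (by rwa [compl_compl])
  rw [compl_compl] at h₂
  omega

theorem MinimalNonSumPerfect.card_le_cliqueNumOn_compl_of_isClique (hG : MinimalNonSumPerfect G)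
    (hA : G.IsUnionOfComponents A) (hA₀ : A.Nonempty) (hAK : G.IsClique (A : Set V)) :
    A.card ≤ G.cliqueNumOn Aᶜ := by
  obtain ⟨v, hv⟩ := hA₀
  have hω := (hG.cliqueNumOn_erase_eq hA hv).2
  have hle : G.cliqueNumOn (A.erase v) ≤ A.card - 1 := card_erase_of_mem hv ▸ cliqueNumOn_le_card
  rw [hAK.cliqueNumOn_eq] at hω
  omega

theorem MinimalNonSumPerfect.card_le_six_of_isClique_compl (hG : MinimalNonSumPerfect G)
    (hA : G.IsUnionOfComponents A) (hA₀ : A.Nonempty) (hAc : Aᶜ.Nonempty)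
    (hAK : G.IsClique (A : Set V)) (hAcK : G.IsClique (↑Aᶜ : Set V)) :
    Fintype.card V ≤ 6 := by
  have h₁ := hG.card_le_cliqueNumOn_compl_of_isClique hA hA₀ hAK
  have h₂ := hG.card_le_cliqueNumOn_compl_of_isClique hA.compl hAc hAcK
  rw [hAcK.cliqueNumOn_eq] at h₁
  rw [compl_compl, hAK.cliqueNumOn_eq] at h₂
  have hn := hG.card_eq_add_max hA hA₀
  rw [hAK.cliqueNumOn_eq, hAcK.cliqueNumOn_eq] at hn
  have := hAK.cliqueNumOn_compl_le_one
  have := hAcK.cliqueNumOn_compl_le_one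
  have := A.card_add_card_compl
  omega

theorem MinimalNonSumPerfect.card_eq_two_of_not_isClique_compl (hG : MinimalNonSumPerfect G)
    (hA : G.IsUnionOfComponents A) (hA₀ : A.Nonempty) (hAK : G.IsClique (A : Set V))
    (hAcK : ¬ G.IsClique (↑Aᶜ : Set V)) :
    A.card = 2 ∧ Aᶜ.card = Gᶜ.cliqueNumOn Aᶜ + G.cliqueNumOn Aᶜ := by
  obtain ⟨K, hKB, hK, hKcard⟩ := G.exists_isClique_card_eq_cliqueNumOn Aᶜ
  have hAKle := hG.card_add_card_le hA subset_rfl hKB <| union_comm K A ▸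
    union_ne_univ_of_ssubset (ssubset_of_subset_of_ne hKB fun e => hAcK (e ▸ hK))
      disjoint_compl_right
  rw [hK.cliqueNumOn_eq, hAK.cliqueNumOn_eq] at hAKle
  have hE := hG.add_max_lt_card hA
  rw [hAK.cliqueNumOn_eq] at hE
  have := hG.card_le_of_ne_univ (s := Aᶜ) ((compl_ne_univ_iff_nonempty A).2 hA₀)
  have := hG.card_le_cliqueNumOn_compl_of_isClique hA hA₀ hAK
  have := hK.cliqueNumOn_compl_le_one
  have := hAK.cliqueNumOn_compl_le_one
  have := one_le_cliqueNumOn (G := Gᶜ) hA₀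
  have := A.card_add_card_compl
  omega

theorem MinimalNonSumPerfect.card_le_six_of_not_isClique_compl (hG : MinimalNonSumPerfect G)
    (hA : G.IsUnionOfComponents A) (hA₀ : A.Nonempty) (hAK : G.IsClique (A : Set V))
    (hAcK : ¬ G.IsClique (↑Aᶜ : Set V)) : Fintype.card V ≤ 6 := by
  obtain ⟨hA₂, hB⟩ := hG.card_eq_two_of_not_isClique_compl hA hA₀ hAK hAcK
  have hw := hG.card_le_cliqueNumOn_compl_of_isClique hA hA₀ hAK
  have herase : ∀ u ∈ Aᶜ, Gᶜ.cliqueNumOn (Aᶜ.erase u) = Gᶜ.cliqueNumOn Aᶜ ∧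
      G.cliqueNumOn (Aᶜ.erase u) = G.cliqueNumOn Aᶜ := by
    intro u hu
    obtain ⟨hα, hω⟩ := hG.cliqueNumOn_erase_eq hA.compl hu
    rw [compl_compl, hAK.cliqueNumOn_eq] at hω
    have : 2 ≤ G.cliqueNumOn (Aᶜ.erase u) := by
      by_contra! h
      have := (isClique_compl_of_cliqueNumOn_le_one (G := G) (s := Aᶜ.erase u)
        (by omega)).cliqueNumOn_eq
      rw [card_erase_of_mem hu] at this
      omega
    omega
  have hα := cliqueNumOn_le_two_of_forall_erase (G := Gᶜ) (B := Aᶜ)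
    (by rw [compl_compl]; omega) (fun u hu => by rw [compl_compl]; exact (herase u hu).2)
    (fun u hu => (herase u hu).1)
  have hω := cliqueNumOn_le_two_of_forall_erase (G := G) hB
    (fun u hu => (herase u hu).1) (fun u hu => (herase u hu).2)
  have := A.card_add_card_compl
  omega

theorem MinimalNonSumPerfect.card_le_six_of_isClique (hG : MinimalNonSumPerfect G)
    (hA : G.IsUnionOfComponents A) (hA₀ : A.Nonempty) (hAc : Aᶜ.Nonempty)
    (hAK : G.IsClique (A : Set V)) : Fintype.card V ≤ 6 := by
  by_cases hAcK : G.IsClique (↑Aᶜ : Set V)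
  · exact hG.card_le_six_of_isClique_compl hA hA₀ hAc hAK hAcK
  · exact hG.card_le_six_of_not_isClique_compl hA hA₀ hAK hAcK

end MinimalNonSumPerfect

/-- A minimal non-sum-perfect graph on at least 7 vertices is connected. -/
theorem stmt15 {V : Type*} [Fintype V] (G : SimpleGraph V)
    (hG : MinimalNonSumPerfect G) (hcard : 7 ≤ Fintype.card V) :
    G.Connected := by
  classical
  by_contra hconn
  have : Nonempty V := Fintype.card_pos_iff.1 (by omega)
  obtain ⟨u, v, huv⟩ : ∃ u v, ¬ G.Reachable u v := by
    simpa [connected_iff, Preconnected] using hconn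
  set A := univ.filter (G.Reachable u)
  have hA : G.IsUnionOfComponents A := fun x hx y hy hxy =>
    hy (mem_filter.2 ⟨mem_univ y, (mem_filter.1 hx).2.trans hxy.reachable⟩)
  have hA₀ : A.Nonempty := ⟨u, mem_filter.2 ⟨mem_univ u, Reachable.refl u⟩⟩
  have hAc : Aᶜ.Nonempty := ⟨v, by simpa [A] using huv⟩
  have h6 : Fintype.card V ≤ 6 := by
    rcases hG.isClique_or_isClique_compl hA hA₀ hAc with hAK | hAcK
    · exact hG.card_le_six_of_isClique hA hA₀ hAc hAK
    · exact hG.card_le_six_of_isClique hA.compl hAc (by rwa [compl_compl]) hAcK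
  omega
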